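/- Let y, y_prev, ŷ, α be real numbers and let c ∈ {−1, 1} be such that c·(y − y_prev) > 0 (the predicted trend c is correct), (ŷ − y_prev)·(y − y_prev) < 0 (the forecast ŷ lies in the wrong trend), and 0 < α ≤ 2·|y − y_prev|. Then (y_prev + c·α − y)² ≤ (ŷ − y)². (In scenario S₄ of the TATS model, the adjusted forecast y_{t−1} + ĉ_t·α has squared error no larger than the value forecaster's squared error, for any adjustment step α up to twice the magnitude of the true movement.) -/
import Mathlib

/-- Scenario S₄ of the TATS model: if the predicted trend `c ∈ {-1, 1}` is correct
(`c * (y - y_prev) > 0`), the forecast `yhat` lies in the wrong trend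
(`(yhat - y_prev) * (y - y_prev) < 0`), and `0 < α ≤ 2 * |y - y_prev|`, then the adjusted
forecast `y_prev + c * α` has squared error no larger than the forecaster's. -/
theorem tats_adjustment_reduces_error_S4 (y y_prev yhat α c : ℝ)
    (hc : c = -1 ∨ c = 1)
    (hcorrect : c * (y - y_prev) > 0)
    (hwrong : (yhat - y_prev) * (y - y_prev) < 0)
    (hα0 : 0 < α) (hα2 : α ≤ 2 * |y - y_prev|) :
    (y_prev + c * α - y) ^ 2 ≤ (yhat - y) ^ 2 := by
  rcases hc with rfl | rfl
  · have hd : y - y_prev < 0 := by nlinarith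
    rw [abs_of_neg hd] at hα2
    nlinarith [sq_nonneg (yhat - y_prev)]
  · have hd : y - y_prev > 0 := by nlinarith
    rw [abs_of_pos hd] at hα2
    nlinarith [sq_nonneg (yhat - y_prev)]
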